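/- The Dynkin map is idempotent: γ(γ(p)) = γ(p) for every p ∈ T. -/

import Mathlib

noncomputable section

open scoped BigOperators

variable (K : Type) [Field K] [CharZero K]

/-- The free associative algebra `T = K⟨x,y⟩`, realized as the monoid algebra of the
free monoid on two generators. -/
abbrev T := MonoidAlgebra K (FreeMonoid (Fin 2))

/-- The word `v₁⋯vₙ` (a list of letters) as an element of `T`. -/
def word (l : List (Fin 2)) : T K := MonoidAlgebra.single (FreeMonoid.ofList l) 1

/-- The generator `x`. -/
def X : T K := word K [0]

/-- The generator `y`. -/
def Y : T K := word K [1]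

/-- Right-nested bracket `[v₁,[v₂,…,[vₙ₋₁,vₙ]…]]` of a word. -/
def brList : List (Fin 2) → T K
  | [] => 0
  | [v] => word K [v]
  | v :: rest => word K [v] * brList rest - brList rest * word K [v]

/-- The Dynkin map `γ : T → T`, sending a word `v₁⋯vₙ` to
`(1/n)[v₁,[v₂,…,[vₙ₋₁,vₙ]…]]` (and `1 ↦ 0`). -/
def dynkin : T K →ₗ[K] T K :=
  Finsupp.linearCombination K (fun w : FreeMonoid (Fin 2) =>
    ((w.toList.length : K)⁻¹) • brList K w.toList) ∘ₗ (MonoidAlgebra.coeffLinearEquiv K).toLinearMap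

attribute [local instance] LieRing.ofAssociativeRing

/-- The free Lie algebra `L` on `x, y`, as the Lie subalgebra of `T` generated by `x` and `y`. -/
def L : LieSubalgebra K (T K) := LieSubalgebra.lieSpan K (T K) {X K, Y K}

/-- The degree-`n` homogeneous component `T_n` of `T`, spanned by the words of length `n`. -/
def homog (n : ℕ) : Submodule K (T K) :=
  Submodule.span K { t | ∃ l : List (Fin 2), l.length = n ∧ t = word K l }

/-- The value `σ(i)` of a permutation of `{0,…,n-1}` on a natural number (junk value `0`
outside the range). -/
def permVal {n : ℕ} (σ : Equiv.Perm (Fin n)) (i : ℕ) : ℕ :=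
  if h : i < n then (σ ⟨i, h⟩ : ℕ) else 0

/-- The (0-indexed) descent set of a permutation: positions `i ∈ {0,…,n-2}` with
`σ(i) > σ(i+1)`. -/
def descSet {n : ℕ} (σ : Equiv.Perm (Fin n)) : Finset ℕ :=
  (Finset.range (n - 1)).filter fun i => permVal σ (i + 1) < permVal σ i

/-- The number of descents of a permutation. -/
def descNum {n : ℕ} (σ : Equiv.Perm (Fin n)) : ℕ := (descSet σ).card

/-- `DSet n k` is the set of permutations of `{0,…,n-1}` whose descent set is exactly
the first `k` positions (this is `D_{1..k}` of the paper, in 0-indexed form). -/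
def DSet (n k : ℕ) : Finset (Equiv.Perm (Fin n)) :=
  Finset.univ.filter fun σ => descSet σ = Finset.range k

/-- The Eulerian coefficient `c_σ = (-1)^{d(σ)} (binom (n-1) (d σ))⁻¹`. -/
def eulCoeff {n : ℕ} (σ : Equiv.Perm (Fin n)) : K :=
  (-1 : K) ^ descNum σ * ((Nat.choose (n - 1) (descNum σ) : K))⁻¹

/-- The degree-`n` Eulerian idempotent applied to the word `w₁⋯wₙ` given by
`v : Fin n → Fin 2`: `eₙ(w) = Σ_σ c_σ w^σ`. -/
def eul (n : ℕ) (v : Fin n → Fin 2) : T K :=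
  ∑ σ : Equiv.Perm (Fin n), eulCoeff K σ • word K (List.ofFn fun i => v (σ i))

/-- The `a`-part of an element of `T`: the linear map sending a word `a·w ↦ w` and
any word not starting with the letter `a` (or the empty word) to `0`.  For `p` with zero
constant term, `p = x·(letterPart 0 p) + y·(letterPart 1 p)`. -/
def letterPart (a : Fin 2) : T K →ₗ[K] T K :=
  Finsupp.linearCombination K (fun w : FreeMonoid (Fin 2) =>
    match w.toList with
    | [] => 0
    | b :: rest => if b = a then word K rest else 0)
    ∘ₗ (MonoidAlgebra.coeffLinearEquiv K).toLinearMap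

/-- The algebra endomorphism `s : T → T` with `s(x) = -y`, `s(y) = -x`. -/
def sMap : T K →ₐ[K] T K :=
  MonoidAlgebra.lift K (T K) (FreeMonoid (Fin 2))
    (FreeMonoid.lift fun a : Fin 2 => if a = 0 then -(Y K) else -(X K))



/-!
Let `δ` be the unnormalized Dynkin map, sending a word to its right-nested bracket, and let
`ρ : T → End T` be the algebra map sending each letter `a` to `ad a`. Unfolding one letter at a
time gives `δ(u t) = ρ(u)(δ t)` whenever `t` has no constant term. Since `ρ` agrees with `ad` on
Lie elements, for a right-nested bracket `P = [a, Q]` of degree `n` this yields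
`δ P = [a, δ Q] - [Q, a] = (n - 1) [a, Q] + [a, Q] = n P` (Dynkin–Specht–Wever).
As `γ = n⁻¹ δ` on `T_n`, the map `γ` fixes every right-nested bracket, and these span its image.
-/

section

variable (K : Type) [Field K]

def delta : T K →ₗ[K] T K :=
  Finsupp.linearCombination K (fun w : FreeMonoid (Fin 2) => brList K w.toList)
    ∘ₗ (MonoidAlgebra.coeffLinearEquiv K).toLinearMap

def rho : T K →ₐ[K] Module.End K (T K) :=
  MonoidAlgebra.lift K (Module.End K (T K)) (FreeMonoid (Fin 2))
    (FreeMonoid.lift fun a : Fin 2 => LieAlgebra.ad K (T K) (word K [a]))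

lemma single_eq_smul_word (w : FreeMonoid (Fin 2)) (c : K) :
    (MonoidAlgebra.single w c : T K) = c • word K w.toList := by
  rw [word, FreeMonoid.ofList_toList, MonoidAlgebra.smul_single', mul_one]

lemma word_append (l m : List (Fin 2)) : word K (l ++ m) = word K l * word K m := by
  simp [word, MonoidAlgebra.single_mul_single]

lemma word_cons (a : Fin 2) (l : List (Fin 2)) : word K (a :: l) = word K [a] * word K l :=
  word_append K [a] l

lemma delta_word (l : List (Fin 2)) : delta K (word K l) = brList K l := by
  simp [delta, word]

lemma dynkin_word (l : List (Fin 2)) :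
    dynkin K (word K l) = (l.length : K)⁻¹ • brList K l := by
  simp [dynkin, word]

lemma rho_word_singleton (a : Fin 2) :
    rho K (word K [a]) = LieAlgebra.ad K (T K) (word K [a]) := by
  simp [rho, word]

lemma brList_cons (a : Fin 2) {l : List (Fin 2)} (hl : l ≠ []) :
    brList K (a :: l) = word K [a] * brList K l - brList K l * word K [a] := by
  cases l with
  | nil => exact absurd rfl hl
  | cons b l => rfl

lemma rho_brList (l : List (Fin 2)) :
    rho K (brList K l) = LieAlgebra.ad K (T K) (brList K l) := by
  induction l with
  | nil => simp [brList]
  | cons a l ih =>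
    rcases eq_or_ne l [] with rfl | hl
    · exact rho_word_singleton K a
    · have hbracket := (LieAlgebra.ad K (T K)).map_lie (word K [a]) (brList K l)
      simp only [Ring.lie_def] at hbracket
      rw [brList_cons K a hl, map_sub, map_mul, map_mul, rho_word_singleton, ih, hbracket]

lemma word_mem_homog (l : List (Fin 2)) : word K l ∈ homog K l.length :=
  Submodule.subset_span ⟨l, rfl, rfl⟩

lemma mul_mem_homog {m n : ℕ} {s t : T K} (hs : s ∈ homog K m) (ht : t ∈ homog K n) :
    s * t ∈ homog K (m + n) := by
  have hle : homog K m * homog K n ≤ homog K (m + n) := by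
    rw [homog, homog, Submodule.span_mul_span]
    refine Submodule.span_mono ?_
    rintro _ ⟨_, ⟨l, rfl, rfl⟩, _, ⟨l', rfl, rfl⟩, rfl⟩
    exact ⟨l ++ l', List.length_append .., (word_append K l l').symm⟩
  exact hle (Submodule.mul_mem_mul hs ht)

lemma brList_mem_homog (l : List (Fin 2)) : brList K l ∈ homog K l.length := by
  induction l with
  | nil => simp [brList]
  | cons a l ih =>
    rcases eq_or_ne l [] with rfl | hl
    · exact word_mem_homog K [a]
    · have hleft := mul_mem_homog K (word_mem_homog K [a]) ih
      have hright := mul_mem_homog K ih (word_mem_homog K [a])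
      rw [List.length_singleton, add_comm] at hleft
      rw [brList_cons K a hl]
      exact sub_mem hleft hright

lemma delta_word_append (l : List (Fin 2)) {m : List (Fin 2)} (hm : m ≠ []) :
    delta K (word K (l ++ m)) = rho K (word K l) (delta K (word K m)) := by
  induction l with
  | nil => rw [List.nil_append, show word K [] = 1 from rfl, map_one, Module.End.one_apply]
  | cons a l ih =>
    rw [List.cons_append, delta_word, brList_cons K a (by simp [hm]), ← delta_word, ih,
      word_cons K a l, map_mul, Module.End.mul_apply,
      rho_word_singleton, LieAlgebra.ad_apply, Ring.lie_def]

lemma delta_mul_word (u : T K) {m : List (Fin 2)} (hm : m ≠ []) :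
    delta K (u * word K m) = rho K u (delta K (word K m)) := by
  induction u using MonoidAlgebra.induction_linear with
  | zero => simp
  | add u v hu hv => rw [add_mul, map_add, hu, hv, map_add, LinearMap.add_apply]
  | single w c =>
    rw [single_eq_smul_word, smul_mul_assoc, map_smul, ← word_append,
      delta_word_append K _ hm, map_smul, LinearMap.smul_apply]

lemma delta_mul (u : T K) {n : ℕ} (hn : n ≠ 0) {t : T K} (ht : t ∈ homog K n) :
    delta K (u * t) = rho K u (delta K t) := by
  induction ht using Submodule.span_induction with
  | mem v hv =>
    obtain ⟨m, rfl, rfl⟩ := hv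
    exact delta_mul_word K u (List.ne_nil_of_length_pos (Nat.pos_of_ne_zero hn))
  | zero => simp
  | add v w _ _ hv hw => rw [mul_add, map_add, map_add, hv, hw, map_add]
  | smul c v _ hv => rw [mul_smul_comm, map_smul, hv, map_smul, map_smul]

lemma delta_brList (l : List (Fin 2)) :
    delta K (brList K l) = (l.length : K) • brList K l := by
  induction l with
  | nil => simp [brList]
  | cons a l ih =>
    rcases eq_or_ne l [] with rfl | hl
    · simp [brList, delta_word]
    · have hl_pos : l.length ≠ 0 := by simpa using hl
      rw [brList_cons K a hl, map_sub,
        delta_mul K _ hl_pos (brList_mem_homog K l),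
        delta_mul K _ one_ne_zero (word_mem_homog K [a]),
        ih, rho_word_singleton, rho_brList, delta_word]
      simp only [LieAlgebra.ad_apply, Ring.lie_def, map_smul, brList, List.length_cons,
        Nat.cast_succ]
      module

lemma dynkin_eq_inv_smul_delta_of_mem_homog {n : ℕ} {t : T K} (ht : t ∈ homog K n) :
    dynkin K t = (n : K)⁻¹ • delta K t := by
  induction ht using Submodule.span_induction with
  | mem u hu =>
    obtain ⟨m, rfl, rfl⟩ := hu
    rw [dynkin_word, delta_word]
  | zero => simp
  | add u v _ _ hu hv => rw [map_add, map_add, hu, hv, smul_add]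
  | smul c u _ hu => rw [map_smul, map_smul, hu, smul_comm]

end

lemma dynkin_brList {l : List (Fin 2)} (hl : l ≠ []) :
    dynkin K (brList K l) = brList K l := by
  have hlen : (l.length : K) ≠ 0 := by simpa using hl
  rw [dynkin_eq_inv_smul_delta_of_mem_homog K (brList_mem_homog K l), delta_brList,
    inv_smul_smul₀ hlen]

/-- The Dynkin map is idempotent: `γ(γ(p)) = γ(p)` for every `p ∈ T`. -/
theorem stmt1 (p : T K) : dynkin K (dynkin K p) = dynkin K p := by
  induction p using MonoidAlgebra.induction_linear with
  | zero => simp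
  | add f g hf hg => rw [map_add, map_add, hf, hg]
  | single w c =>
    rw [single_eq_smul_word, map_smul, map_smul, dynkin_word]
    rcases eq_or_ne w.toList [] with hw | hw
    · simp [hw, brList]
    · rw [map_smul, dynkin_brList K hw]

end
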